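/- The number of 123-avoiding permutations of {1,...,n} equals a_1(n+1, n+1), where a_1(m,i) = C(m+i-2, m-1) - C(m+i-2, m); consequently it equals C(2n, n)/(n+1). -/

import Mathlib

/-!
Write permutations of `{0, …, m-1}` in one-line notation. A list `h :: t` avoids 123 iff `t`
does and the entries of `t` above `h` occur in decreasing order. Deleting `h` and standardizing
`t` therefore identifies the 123-avoiders of length `m + 1` with first entry `h` with the
123-avoiders of length `m` whose entries `≥ h` decrease; call their number `avoidCount m h`.
Sorting the avoiders counted by `avoidCount (m + 1) i` by their first entry, which is either some
`h < i` or the maximum `m`, gives the ballot recurrence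
`avoidCount (m + 1) i = ∑ h ≤ i, avoidCount m h`. Hence
`avoidCount m i = C(m+i, m) - C(m+i, m+1)`, and `avoidCount n n` is the Catalan number.
-/

def Avoids123 {n : ℕ} (π : Equiv.Perm (Fin n)) : Prop :=
  ¬ ∃ i j k : Fin n, i < j ∧ j < k ∧ π i < π j ∧ π j < π k

/-- `a1 m i` is the number of 123-avoiding permutations of `{1,…,m}` with
first entry `i` (1-indexed values). -/
noncomputable def a1 (m i : ℕ) : ℕ :=
  Nat.card {π : Equiv.Perm (Fin m) //
    Avoids123 π ∧ ∀ j : Fin m, j.val = 0 → ((π j : Fin m) : ℕ) + 1 = i}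

open Finset

def List.DecreasingFrom (c : ℕ) (l : List ℕ) : Prop :=
  l.Pairwise fun a b => c ≤ a → b ≤ a

def List.Avoids123 : List ℕ → Prop
  | [] => True
  | h :: t => t.DecreasingFrom (h + 1) ∧ t.Avoids123

namespace List

instance (c : ℕ) : DecidablePred (DecreasingFrom c) := fun l =>
  inferInstanceAs (Decidable (l.Pairwise _))

instance decidableAvoids123 : DecidablePred Avoids123
  | [] => isTrue trivial
  | h :: t =>
    have := decidableAvoids123 t
    inferInstanceAs (Decidable (t.DecreasingFrom (h + 1) ∧ t.Avoids123))

theorem decreasingFrom_cons {c h : ℕ} {t : List ℕ} :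
    (h :: t).DecreasingFrom c ↔ (c ≤ h → ∀ x ∈ t, x ≤ h) ∧ t.DecreasingFrom c := by
  simp only [DecreasingFrom, pairwise_cons]
  grind

theorem DecreasingFrom.mono {c d : ℕ} {l : List ℕ} (hl : l.DecreasingFrom c) (hcd : c ≤ d) :
    l.DecreasingFrom d :=
  hl.imp fun h hd => h (hcd.trans hd)

theorem decreasingFrom_of_forall_le {c : ℕ} {l : List ℕ} (hl : ∀ x ∈ l, x ≤ c) :
    l.DecreasingFrom c :=
  pairwise_of_forall_mem_list fun _ _ b hb hca => (hl b hb).trans hca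

theorem decreasingFrom_map_iff {f : ℕ → ℕ} (hf : StrictMono f) {c d : ℕ}
    (hcd : ∀ x, c ≤ f x ↔ d ≤ x) {l : List ℕ} :
    (l.map f).DecreasingFrom c ↔ l.DecreasingFrom d := by
  simp only [DecreasingFrom, pairwise_map, hcd, hf.le_iff_le]

theorem avoids123_map_iff {f : ℕ → ℕ} (hf : StrictMono f) {l : List ℕ} :
    (l.map f).Avoids123 ↔ l.Avoids123 := by
  induction l with
  | nil => rfl
  | cons h t ih =>
    have hshift (x : ℕ) : f h + 1 ≤ f x ↔ h + 1 ≤ x := by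
      simp only [Nat.add_one_le_iff, hf.lt_iff_lt]
    simp only [map_cons, Avoids123, ih, decreasingFrom_map_iff hf hshift]

theorem avoids123_ofFn_iff {m : ℕ} (f : Fin m → ℕ) :
    (ofFn f).Avoids123 ↔ ¬ ∃ i j k : Fin m, i < j ∧ j < k ∧ f i < f j ∧ f j < f k := by
  induction m with
  | zero => simp [Avoids123]
  | succ m ih =>
    rw [ofFn_succ, Avoids123, ih, DecreasingFrom, pairwise_ofFn]
    simp only [Fin.exists_fin_succ, Fin.succ_lt_succ_iff, Fin.not_lt_zero, Fin.succ_pos]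
    grind

theorem Avoids123.decreasingFrom_of_lt {c h : ℕ} {t : List ℕ} (hav : (h :: t).Avoids123)
    (hc : h < c) : (h :: t).DecreasingFrom c :=
  List.decreasingFrom_cons.2 ⟨fun hch => absurd hch (not_le.2 hc), hav.1.mono hc⟩

theorem avoids123_cons_iff_of_forall_lt {m : ℕ} {t : List ℕ} (ht : ∀ x ∈ t, x < m) :
    (m :: t).Avoids123 ↔ t.Avoids123 := by
  simp only [Avoids123, decreasingFrom_of_forall_le fun x hx => (ht x hx).le.trans m.le_succ,
    true_and]

end List

def Nat.succAbove (h x : ℕ) : ℕ := if x < h then x else x + 1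

def Nat.predAbove (h x : ℕ) : ℕ := if h < x then x - 1 else x

namespace Nat

theorem strictMono_succAbove (h : ℕ) : StrictMono (succAbove h) := by
  intro a b hab
  simp only [succAbove]
  split_ifs <;> omega

theorem predAbove_succAbove (h x : ℕ) : predAbove h (succAbove h x) = x := by
  simp only [succAbove, predAbove]
  split_ifs <;> omega

theorem succAbove_predAbove {h x : ℕ} (hx : x ≠ h) : succAbove h (predAbove h x) = x := by
  simp only [succAbove, predAbove]
  split_ifs <;> omega

theorem succ_le_succAbove_iff {h x : ℕ} : h + 1 ≤ succAbove h x ↔ h ≤ x := by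
  simp only [succAbove]
  split_ifs <;> omega

theorem succAbove_of_lt {h x : ℕ} (hx : x < h) : succAbove h x = x := if_pos hx

end Nat

open Nat
open scoped List

def rangePerms (m : ℕ) : Finset (List ℕ) := (List.range m).permutations.toFinset

theorem mem_rangePerms {m : ℕ} {l : List ℕ} : l ∈ rangePerms m ↔ l ~ List.range m := by
  simp [rangePerms, List.mem_permutations]

theorem mem_iff_lt_of_mem_rangePerms {m x : ℕ} {l : List ℕ} (hl : l ∈ rangePerms m) :
    x ∈ l ↔ x < m := by
  rw [(mem_rangePerms.1 hl).mem_iff, List.mem_range]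

theorem card_rangePerms (m : ℕ) : #(rangePerms m) = m ! := by
  rw [rangePerms, List.toFinset_card_of_nodup (List.nodup_permutations _ List.nodup_range),
    List.length_permutations, List.length_range]

theorem map_succAbove_range_perm {h m : ℕ} (hh : h ≤ m) :
    (List.range m).map (succAbove h) ~ (List.range (m + 1)).erase h := by
  rw [List.perm_ext_iff_of_nodup (List.nodup_range.map (strictMono_succAbove h).injective)
    (List.nodup_range.erase h)]
  intro x
  rw [List.nodup_range.mem_erase_iff, List.mem_map]
  simp only [List.mem_range]
  constructor
  · rintro ⟨y, hy, rfl⟩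
    simp only [succAbove]
    split_ifs <;> omega
  · intro hx
    refine ⟨predAbove h x, ?_, succAbove_predAbove hx.1⟩
    simp only [predAbove]
    split_ifs <;> omega

theorem cons_map_succAbove_mem_rangePerms {h m : ℕ} (hh : h ≤ m) {t : List ℕ}
    (ht : t ∈ rangePerms m) : h :: t.map (succAbove h) ∈ rangePerms (m + 1) := by
  rw [mem_rangePerms] at ht ⊢
  exact (((ht.map _).trans (map_succAbove_range_perm hh)).cons h).trans
    (List.perm_cons_erase (List.mem_range.2 (Nat.lt_succ_of_le hh))).symm

theorem exists_eq_cons_of_mem_rangePerms {m : ℕ} {l : List ℕ} (hl : l ∈ rangePerms (m + 1)) :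
    ∃ h t, l = h :: t :=
  List.exists_cons_of_ne_nil fun hnil => by simpa [hnil] using (mem_rangePerms.1 hl).length_eq

theorem not_mem_of_cons_mem_rangePerms {h m : ℕ} {t : List ℕ} (ht : h :: t ∈ rangePerms m) :
    h ∉ t :=
  (List.nodup_cons.1 ((mem_rangePerms.1 ht).nodup_iff.2 List.nodup_range)).1

theorem map_succAbove_map_predAbove {h : ℕ} {t : List ℕ} (ht : h ∉ t) :
    (t.map (predAbove h)).map (succAbove h) = t := by
  rw [List.map_map]
  refine (List.map_congr_left fun x hx => ?_).trans (List.map_id t)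
  exact succAbove_predAbove fun hxh => ht (hxh ▸ hx)

theorem map_predAbove_map_succAbove (h : ℕ) (t : List ℕ) :
    (t.map (succAbove h)).map (predAbove h) = t := by
  simp [List.map_map, Function.comp_def, predAbove_succAbove]

theorem map_predAbove_tail_mem_rangePerms {h m : ℕ} (hh : h ≤ m) {l : List ℕ}
    (hl : l ∈ rangePerms (m + 1)) (hlh : l.headI = h) :
    l.tail.map (predAbove h) ∈ rangePerms m := by
  obtain ⟨h', t, rfl⟩ := exists_eq_cons_of_mem_rangePerms hl
  obtain rfl : h' = h := hlh
  rw [mem_rangePerms] at hl ⊢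
  have hterase : t ~ (List.range (m + 1)).erase h' :=
    (hl.trans (List.perm_cons_erase (List.mem_range.2 (Nat.lt_succ_of_le hh)))).cons_inv
  have := (hterase.trans (map_succAbove_range_perm hh).symm).map (predAbove h')
  rwa [map_predAbove_map_succAbove] at this

theorem cons_map_succAbove_map_predAbove_tail {h m : ℕ} {l : List ℕ}
    (hl : l ∈ rangePerms (m + 1)) (hlh : l.headI = h) :
    h :: (l.tail.map (predAbove h)).map (succAbove h) = l := by
  obtain ⟨h', t, rfl⟩ := exists_eq_cons_of_mem_rangePerms hl
  obtain rfl : h' = h := hlh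
  rw [List.tail_cons, map_succAbove_map_predAbove (not_mem_of_cons_mem_rangePerms hl)]

theorem card_filter_headI_eq {h m : ℕ} (hh : h ≤ m) (R : List ℕ → Prop) [DecidablePred R] :
    #{l ∈ rangePerms (m + 1) | l.headI = h ∧ R l} =
      #{t ∈ rangePerms m | R (h :: t.map (succAbove h))} := by
  symm
  refine card_nbij' (fun t => h :: t.map (succAbove h)) (fun l => l.tail.map (predAbove h))
    ?_ ?_ ?_ ?_
  · intro t ht
    simp only [coe_filter, Set.mem_ofPred_eq] at ht ⊢
    exact ⟨cons_map_succAbove_mem_rangePerms hh ht.1, rfl, ht.2⟩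
  · intro l hl
    simp only [coe_filter, Set.mem_ofPred_eq] at hl ⊢
    obtain ⟨hlm, hlh, hR⟩ := hl
    rw [cons_map_succAbove_map_predAbove_tail hlm hlh]
    exact ⟨map_predAbove_tail_mem_rangePerms hh hlm hlh, hR⟩
  · intro t _
    simp only [List.tail_cons, map_predAbove_map_succAbove]
  · intro l hl
    simp only [coe_filter, Set.mem_ofPred_eq] at hl
    exact cons_map_succAbove_map_predAbove_tail hl.1 hl.2.1

theorem eq_of_cons_mem_rangePerms_of_decreasingFrom {h i m : ℕ} {t : List ℕ}
    (ht : h :: t ∈ rangePerms (m + 1)) (hd : (h :: t).DecreasingFrom i) (hi : i ≤ h) :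
    h = m := by
  have hmax := (List.decreasingFrom_cons.1 hd).1 hi
  have hh : h < m + 1 := (mem_iff_lt_of_mem_rangePerms ht).1 List.mem_cons_self
  rcases List.mem_cons.1 ((mem_iff_lt_of_mem_rangePerms ht).2 m.lt_succ_self) with hm | hm
  · exact hm.symm
  · exact le_antisymm (Nat.lt_succ_iff.1 hh) (hmax m hm)

def headCount (m h : ℕ) : ℕ := #{l ∈ rangePerms m | l.headI = h ∧ l.Avoids123}

def avoidCount (m c : ℕ) : ℕ :=
  #{l ∈ rangePerms m | l.Avoids123 ∧ l.DecreasingFrom c}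

theorem headCount_succ {h m : ℕ} (hh : h ≤ m) : headCount (m + 1) h = avoidCount m h := by
  rw [headCount, card_filter_headI_eq hh, avoidCount]
  refine congrArg card (filter_congr fun t _ => ?_)
  rw [List.Avoids123, List.avoids123_map_iff (strictMono_succAbove h),
    List.decreasingFrom_map_iff (strictMono_succAbove h) fun _ => succ_le_succAbove_iff, and_comm]

theorem card_filter_headI_lt (i m : ℕ) :
    #{l ∈ rangePerms (m + 1) | (l.Avoids123 ∧ l.DecreasingFrom i) ∧ l.headI < i} =
      ∑ h ∈ range i, headCount (m + 1) h := by
  rw [card_eq_sum_card_fiberwise (f := List.headI) (t := range i)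
    fun l hl => mem_range.2 (mem_filter.1 hl).2.2]
  refine sum_congr rfl fun h hh => congrArg card ?_
  rw [filter_filter]
  refine filter_congr fun l hl => ?_
  obtain ⟨h', t, rfl⟩ := exists_eq_cons_of_mem_rangePerms hl
  simp only [List.headI_cons]
  constructor
  · rintro ⟨⟨⟨hav, -⟩, -⟩, rfl⟩
    exact ⟨rfl, hav⟩
  · rintro ⟨rfl, hav⟩
    have hh := mem_range.1 hh
    exact ⟨⟨⟨hav, hav.decreasingFrom_of_lt hh⟩, hh⟩, rfl⟩

theorem card_filter_not_headI_lt {i m : ℕ} (hi : i ≤ m) :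
    #{l ∈ rangePerms (m + 1) | (l.Avoids123 ∧ l.DecreasingFrom i) ∧ ¬ l.headI < i} =
      avoidCount m i := calc
  _ = #{l ∈ rangePerms (m + 1) | l.headI = m ∧ (l.Avoids123 ∧ l.DecreasingFrom i)} := by
    refine congrArg card (filter_congr fun l hl => ?_)
    obtain ⟨h, t, rfl⟩ := exists_eq_cons_of_mem_rangePerms hl
    simp only [List.headI_cons, not_lt]
    constructor
    · rintro ⟨⟨hav, hd⟩, hih⟩
      exact ⟨eq_of_cons_mem_rangePerms_of_decreasingFrom hl hd hih, hav, hd⟩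
    · rintro ⟨rfl, hav, hd⟩
      exact ⟨⟨hav, hd⟩, hi⟩
  _ = #{t ∈ rangePerms m |
        (m :: t.map (succAbove m)).Avoids123 ∧ (m :: t.map (succAbove m)).DecreasingFrom i} :=
    card_filter_headI_eq le_rfl _
  _ = avoidCount m i := by
    refine congrArg card (filter_congr fun t ht => ?_)
    have hlt (x : ℕ) (hx : x ∈ t) : x < m := (mem_iff_lt_of_mem_rangePerms ht).1 hx
    rw [(List.map_congr_left fun x hx => succAbove_of_lt (hlt x hx)).trans (List.map_id t),
      List.avoids123_cons_iff_of_forall_lt hlt, List.decreasingFrom_cons]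
    have hle : i ≤ m → ∀ x ∈ t, x ≤ m := fun _ x hx => (hlt x hx).le
    rw [eq_true hle, true_and]

theorem avoidCount_succ {i m : ℕ} (hi : i ≤ m) :
    avoidCount (m + 1) i = ∑ h ∈ range (i + 1), avoidCount m h := by
  rw [avoidCount, ← card_filter_add_card_filter_not (fun l => l.headI < i), filter_filter,
    filter_filter, card_filter_headI_lt, card_filter_not_headI_lt hi, sum_range_succ]
  congr 1
  exact sum_congr rfl fun h hh => headCount_succ ((mem_range.1 hh).le.trans hi)

theorem avoidCount_of_le {c m : ℕ} (hm : m ≤ c + 1) :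
    avoidCount m c = #{l ∈ rangePerms m | l.Avoids123} := by
  refine congrArg card (filter_congr fun l hl => and_iff_left ?_)
  exact List.decreasingFrom_of_forall_le fun x hx =>
    Nat.lt_succ_iff.1 (((mem_iff_lt_of_mem_rangePerms hl).1 hx).trans_le hm)

theorem avoidCount_zero (c : ℕ) : avoidCount 0 c = 1 := by
  simp [avoidCount, rangePerms, filter_singleton, List.Avoids123, List.DecreasingFrom]

theorem sum_range_ballot (m i : ℕ) :
    ∑ h ∈ range (i + 1), ((m + h).choose m - (m + h).choose (m + 1) : ℤ) =
      (m + 1 + i).choose (m + 1) - (m + 1 + i).choose (m + 2) := by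
  induction i with
  | zero => simp [Nat.choose_succ_self]
  | succ i ih =>
    rw [sum_range_succ, ih, show m + 1 + (i + 1) = m + 1 + i + 1 by ring,
      Nat.choose_succ_succ' (m + 1 + i), Nat.choose_succ_succ' (m + 1 + i),
      show m + (i + 1) = m + 1 + i by ring]
    push_cast
    ring

theorem avoidCount_eq_ballot {i m : ℕ} (hi : i ≤ m) :
    (avoidCount m i : ℤ) = (m + i).choose m - (m + i).choose (m + 1) := by
  induction m generalizing i with
  | zero => simp [Nat.le_zero.1 hi, avoidCount_zero]
  | succ m ih =>
    have hlt (i : ℕ) (hi : i ≤ m) : (avoidCount (m + 1) i : ℤ) =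
        (m + 1 + i).choose (m + 1) - (m + 1 + i).choose (m + 2) := by
      rw [avoidCount_succ hi, Nat.cast_sum,
        sum_congr rfl fun h hh => ih (Nat.lt_succ_iff.1 ((mem_range.1 hh).trans_le
          (Nat.succ_le_succ hi))), sum_range_ballot]
    rcases hi.lt_or_eq with hi | rfl
    · exact hlt i (Nat.lt_succ_iff.1 hi)
    · rw [avoidCount_of_le (Nat.le_succ _), ← avoidCount_of_le (c := m) le_rfl, hlt m le_rfl,
        show m + 1 + (m + 1) = 2 * m + 1 + 1 by ring, show m + 1 + m = 2 * m + 1 by ring,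
        Nat.choose_succ_succ' (2 * m + 1) m, Nat.choose_succ_succ' (2 * m + 1) (m + 1),
        Nat.choose_symm_half]
      push_cast
      ring

theorem catalan_eq_choose_sub_choose (n : ℕ) :
    catalan n = (2 * n).choose n - (2 * n).choose (n + 1) := by
  have hcat := succ_mul_catalan_eq_centralBinom n
  have hsucc := Nat.choose_succ_right_eq (2 * n) n
  have hle := Nat.choose_le_centralBinom (n + 1) n
  rw [Nat.centralBinom_eq_two_mul_choose] at hcat hle
  rw [show 2 * n - n = n by omega] at hsucc
  zify [hle] at hcat hsucc ⊢
  refine mul_left_cancel₀ (show (n + 1 : ℤ) ≠ 0 by positivity) ?_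
  linear_combination hcat + hsucc

theorem avoidCount_self (n : ℕ) : avoidCount n n = catalan n := by
  have hle := Nat.choose_le_centralBinom (n + 1) n
  rw [Nat.centralBinom_eq_two_mul_choose] at hle
  rw [catalan_eq_choose_sub_choose, ← Nat.cast_inj (R := ℤ), avoidCount_eq_ballot le_rfl,
    Nat.cast_sub hle, two_mul]

def oneLine {m : ℕ} (π : Equiv.Perm (Fin m)) : List ℕ := List.ofFn fun j => (π j : ℕ)

theorem oneLine_injective {m : ℕ} : Function.Injective (oneLine (m := m)) := fun _ _ h =>
  Equiv.ext fun j => Fin.ext (congrFun (List.ofFn_injective h) j)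

theorem oneLine_mem_rangePerms {m : ℕ} (π : Equiv.Perm (Fin m)) :
    oneLine π ∈ rangePerms m := by
  rw [mem_rangePerms, ← List.map_coe_finRange_eq_range, ← List.ofFn_eq_map]
  exact π.ofFn_comp_perm _

theorem image_oneLine_univ (m : ℕ) : univ.image (oneLine (m := m)) = rangePerms m := by
  refine eq_of_subset_of_card_le (fun l hl => ?_) ?_
  · obtain ⟨π, -, rfl⟩ := mem_image.1 hl
    exact oneLine_mem_rangePerms π
  · rw [card_rangePerms, card_image_of_injective _ oneLine_injective, Finset.card_univ,
      Fintype.card_perm, Fintype.card_fin]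

theorem avoids123_iff_oneLine {m : ℕ} (π : Equiv.Perm (Fin m)) :
    Avoids123 π ↔ (oneLine π).Avoids123 := by
  rw [oneLine, List.avoids123_ofFn_iff]
  rfl

theorem card_subtype_eq_card_filter_oneLine {m : ℕ} {p : Equiv.Perm (Fin m) → Prop}
    {R : List ℕ → Prop} [DecidablePred R] (h : ∀ π, p π ↔ R (oneLine π)) :
    Nat.card {π // p π} = #{l ∈ rangePerms m | R l} := by
  classical
  rw [← image_oneLine_univ, filter_image, card_image_of_injective _ oneLine_injective,
    Nat.card_eq_fintype_card, Fintype.card_subtype]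
  simp only [h]

theorem a1_succ_succ (m h : ℕ) : a1 (m + 1) (h + 1) = headCount (m + 1) h := by
  refine card_subtype_eq_card_filter_oneLine fun π => ?_
  rw [avoids123_iff_oneLine, and_comm, oneLine, List.ofFn_succ, List.headI_cons]
  refine and_congr_left' ⟨fun hπ => by simpa using hπ 0 rfl, fun hπ j hj => ?_⟩
  rw [show j = 0 from Fin.ext hj, hπ]

theorem card_avoids123 (n : ℕ) :
    Nat.card {π : Equiv.Perm (Fin n) // Avoids123 π} = catalan n := by
  rw [← avoidCount_self, avoidCount_of_le n.le_succ]
  exact card_subtype_eq_card_filter_oneLine avoids123_iff_oneLine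

/-- The number of 123-avoiding permutations of `{1,…,n}` equals
`a1 (n+1) (n+1)`, which by the formula `a1 m i = C(m+i-2, m-1) - C(m+i-2, m)`
equals `C(2n, n) - C(2n, n+1)`; consequently it equals `C(2n, n)/(n+1)`. -/
theorem count_avoiding_123_formula (n : ℕ) :
    Nat.card {π : Equiv.Perm (Fin n) // Avoids123 π} = a1 (n + 1) (n + 1) ∧
    a1 (n + 1) (n + 1) =
      ((n + 1) + (n + 1) - 2).choose ((n + 1) - 1) -
        ((n + 1) + (n + 1) - 2).choose (n + 1) ∧
    Nat.card {π : Equiv.Perm (Fin n) // Avoids123 π} = (2 * n).choose n / (n + 1) := by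
  have ha1 : a1 (n + 1) (n + 1) = catalan n := by
    rw [a1_succ_succ, headCount_succ le_rfl, avoidCount_self]
  refine ⟨(card_avoids123 n).trans ha1.symm, ?_, ?_⟩
  · rw [ha1, catalan_eq_choose_sub_choose, show n + 1 + (n + 1) - 2 = 2 * n by omega,
      Nat.add_sub_cancel]
  · rw [card_avoids123, catalan_eq_centralBinom_div, Nat.centralBinom_eq_two_mul_choose]
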